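/- For each of the spaces X ∈ {cs^λ, cs₀^λ, bs^λ}, a sequence a : ℕ → ℂ belongs to the γ-dual of X (i.e. sup_m |∑_{k=0}^m a_k·x_k| < ∞ for every x ∈ X) if and only if both: (1) ∑_{k=0}^∞ |ã_k − ã_{k+1}| < ∞, and (2) sup_k |λ_k·a_k/(λ_k − λ_{k−1})| < ∞, where ã_k = (a_k/(λ_k − λ_{k−1}) − a_{k+1}/(λ_{k+1} − λ_k))·λ_k. -/

import Mathlib

open Filter Topology

/-- `dl l k = λ_k - λ_{k-1}` with the convention `λ_{-1} = 0`. -/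
noncomputable def dl (l : ℕ → ℝ) (k : ℕ) : ℝ := l k - (if k = 0 then 0 else l (k - 1))

/-- `LamT l x n = Λ_n(x) = (1/λ_n) ∑_{k=0}^n (λ_k - λ_{k-1}) x_k`. -/
noncomputable def LamT (l : ℕ → ℝ) (x : ℕ → ℂ) (n : ℕ) : ℂ :=
  (1 / (l n : ℂ)) * ∑ k ∈ Finset.range (n + 1), ((dl l k : ℝ) : ℂ) * x k

/-- `cs^λ`: the partial sums `∑_{n=0}^m Λ_n(x)` converge. -/
def csLam (l : ℕ → ℝ) : Set (ℕ → ℂ) :=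
  {x | ∃ L, Tendsto (fun m => ∑ n ∈ Finset.range (m + 1), LamT l x n) atTop (𝓝 L)}

/-- `cs₀^λ`: the partial sums `∑_{n=0}^m Λ_n(x)` tend to `0`. -/
def cs0Lam (l : ℕ → ℝ) : Set (ℕ → ℂ) :=
  {x | Tendsto (fun m => ∑ n ∈ Finset.range (m + 1), LamT l x n) atTop (𝓝 0)}

/-- `bs^λ`: the partial sums `∑_{n=0}^m Λ_n(x)` are bounded. -/
def bsLam (l : ℕ → ℝ) : Set (ℕ → ℂ) :=
  {x | ∃ C, ∀ m, ‖∑ n ∈ Finset.range (m + 1), LamT l x n‖ ≤ C}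

/-- `ã_k = (a_k/(λ_k - λ_{k-1}) - a_{k+1}/(λ_{k+1} - λ_k)) λ_k`. -/
noncomputable def atil (l : ℕ → ℝ) (a : ℕ → ℂ) (k : ℕ) : ℂ :=
  (a k / ((dl l k : ℝ) : ℂ) - a (k + 1) / ((dl l (k + 1) : ℝ) : ℂ)) * (l k : ℂ)

/-!
Put `t_m = ∑_{n ≤ m} Λ_n(x)`. The map `x ↦ t` is a bijection of sequences carrying `cs^λ`,
`cs₀^λ`, `bs^λ` onto the convergent, null and bounded sequences. Two Abel summations turn
`∑_{k ≤ m} a_k x_k` into `∑_{k ≤ m} A_{mk} t_k`, where row `m` of the lower triangular matrix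
`A` is `(ã_0 - ã_1, …, ã_{m-2} - ã_{m-1}, ã_{m-1} - g_m, g_m)` with
`g_k = λ_k a_k / (λ_k - λ_{k-1})`. Hence each of the three γ-duals is
`{a | sup_m ∑_k |A_{mk}| < ∞}`: this condition suffices on bounded sequences by the trivial
estimate, and is necessary on null sequences by the uniform boundedness principle on `C₀(ℕ, ℂ)`,
tested against finitely supported sign vectors. The row-sum bound unwinds to conditions (1)
and (2).
-/

open Finset

section ZeroAtInftyDual
open ComplexConjugate ZeroAtInfty
variable {𝕜 : Type*} [RCLike 𝕜]

theorem norm_sum_mul_le {s : Finset ℕ} (A t : ℕ → 𝕜) {M : ℝ} (hM : ∀ k, ‖t k‖ ≤ M) :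
    ‖∑ k ∈ s, A k * t k‖ ≤ (∑ k ∈ s, ‖A k‖) * M := by
  rw [sum_mul]
  refine (norm_sum_le _ _).trans (sum_le_sum fun k _ => ?_)
  rw [norm_mul]
  exact mul_le_mul_of_nonneg_left (hM k) (norm_nonneg _)

noncomputable def finiteSumCLM (s : Finset ℕ) (A : ℕ → 𝕜) : C₀(ℕ, 𝕜) →L[𝕜] 𝕜 :=
  LinearMap.mkContinuous
    { toFun := fun f => ∑ k ∈ s, A k * f k
      map_add' := fun f g => by simp [mul_add, sum_add_distrib]
      map_smul' := fun c f => by simp [mul_sum, mul_left_comm] }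
    (∑ k ∈ s, ‖A k‖) fun f => norm_sum_mul_le A f fun k =>
      ZeroAtInftyContinuousMap.norm_toBCF_eq_norm (f := f) ▸ f.toBCF.norm_coe_le_norm k

noncomputable def signVector (s : Finset ℕ) (A : ℕ → 𝕜) : C₀(ℕ, 𝕜) where
  toFun k := if k ∈ s then conj (A k) / ‖A k‖ else 0
  continuous_toFun := continuous_of_discreteTopology
  zero_at_infty' := by
    rw [cocompact_eq_cofinite]
    exact tendsto_const_nhds.congr' (s.eventually_cofinite_notMem.mono fun k hk => by simp [hk])

theorem norm_signVector_le (s : Finset ℕ) (A : ℕ → 𝕜) : ‖signVector s A‖ ≤ 1 := by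
  rw [← ZeroAtInftyContinuousMap.norm_toBCF_eq_norm, BoundedContinuousFunction.norm_le zero_le_one]
  intro k
  change ‖if k ∈ s then conj (A k) / ‖A k‖ else 0‖ ≤ 1
  split_ifs
  · rw [norm_div, RCLike.norm_conj, RCLike.norm_ofReal, abs_norm]
    exact div_self_le_one _
  · simp

theorem finiteSumCLM_signVector (s : Finset ℕ) (A : ℕ → 𝕜) :
    finiteSumCLM s A (signVector s A) = ((∑ k ∈ s, ‖A k‖ : ℝ) : 𝕜) := by
  change ∑ k ∈ s, A k * (if k ∈ s then conj (A k) / ‖A k‖ else 0) = _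
  push_cast
  refine sum_congr rfl fun k hk => ?_
  rw [if_pos hk, mul_div_assoc', RCLike.mul_conj]
  rcases eq_or_ne (A k) 0 with hzero | hne
  · simp [hzero]
  · have : (‖A k‖ : 𝕜) ≠ 0 := by simpa using hne
    field_simp

theorem exists_bound_sum_norm_of_forall_tendsto_zero {ι : Type*} (s : ι → Finset ℕ)
    (A : ι → ℕ → 𝕜)
    (h : ∀ t : ℕ → 𝕜, Tendsto t atTop (𝓝 0) → ∃ C, ∀ i, ‖∑ k ∈ s i, A i k * t k‖ ≤ C) :
    ∃ C, ∀ i, ∑ k ∈ s i, ‖A i k‖ ≤ C := by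
  obtain ⟨C, hC⟩ := banach_steinhaus (g := fun i => finiteSumCLM (s i) (A i)) fun f =>
    h f (cocompact_eq_atTop (α := ℕ) ▸ zero_at_infty f)
  refine ⟨C, fun i => ?_⟩
  calc ∑ k ∈ s i, ‖A i k‖ = ‖finiteSumCLM (s i) (A i) (signVector (s i) (A i))‖ := by
        rw [finiteSumCLM_signVector, RCLike.norm_ofReal,
          abs_of_nonneg (sum_nonneg fun _ _ => norm_nonneg _)]
    _ ≤ C * ‖signVector (s i) (A i)‖ := (finiteSumCLM (s i) (A i)).le_of_opNorm_le (hC i) _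
    _ ≤ C := mul_le_of_le_one_right ((norm_nonneg _).trans (hC i)) (norm_signVector_le _ _)

end ZeroAtInftyDual

def backDiff {M : Type*} [AddCommGroup M] (f : ℕ → M) (k : ℕ) : M :=
  f k - if k = 0 then 0 else f (k - 1)

section BackDiff
variable {M : Type*} [AddCommGroup M]

@[simp]
theorem backDiff_zero (f : ℕ → M) : backDiff f 0 = f 0 := by
  simp [backDiff]

@[simp]
theorem backDiff_succ (f : ℕ → M) (k : ℕ) : backDiff f (k + 1) = f (k + 1) - f k := by
  simp [backDiff]

theorem sum_range_backDiff (f : ℕ → M) (n : ℕ) : ∑ k ∈ range (n + 1), backDiff f k = f n := by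
  induction n with
  | zero => simp
  | succ n ih => rw [sum_range_succ, ih, backDiff_succ, add_sub_cancel]

theorem backDiff_sum_range (g : ℕ → M) :
    backDiff (fun n => ∑ k ∈ range (n + 1), g k) = g := by
  funext k
  cases k with
  | zero => simp
  | succ k => simp [sum_range_succ _ (k + 1)]

end BackDiff

noncomputable def lamSum (l : ℕ → ℝ) (x : ℕ → ℂ) (m : ℕ) : ℂ :=
  ∑ n ∈ range (m + 1), LamT l x n

noncomputable def scaledCoeff (l : ℕ → ℝ) (a : ℕ → ℂ) (k : ℕ) : ℂ :=
  (l k : ℂ) * a k / ((dl l k : ℝ) : ℂ)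

noncomputable def abelMatrix (l : ℕ → ℝ) (a : ℕ → ℂ) (m k : ℕ) : ℂ :=
  if k + 1 < m then atil l a k - atil l a (k + 1)
  else if k + 1 = m then atil l a k - scaledCoeff l a m
  else if k = m then scaledCoeff l a m else 0

section AbelMatrix
variable (l : ℕ → ℝ) (a : ℕ → ℂ)

theorem abelMatrix_self (m : ℕ) : abelMatrix l a m m = scaledCoeff l a m := by
  simp [abelMatrix]

theorem sum_range_abelMatrix_succ {M : Type*} [AddCommMonoid M] (F : ℕ → ℂ → M) (m : ℕ) :
    ∑ k ∈ range (m + 2), F k (abelMatrix l a (m + 1) k) =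
      ∑ k ∈ range m, F k (atil l a k - atil l a (k + 1)) +
        F m (atil l a m - scaledCoeff l a (m + 1)) + F (m + 1) (scaledCoeff l a (m + 1)) := by
  rw [sum_range_succ, sum_range_succ, abelMatrix_self]
  congr 2
  · exact sum_congr rfl fun k hk => by
      rw [abelMatrix, if_pos (by simpa using hk)]
  · simp [abelMatrix]

theorem sum_div_dl_mul_backDiff_succ (t : ℕ → ℂ) (m : ℕ) :
    ∑ k ∈ range (m + 2), a k / ((dl l k : ℝ) : ℂ) * backDiff (fun n => (l n : ℂ) * backDiff t n) k
      = ∑ k ∈ range m, (atil l a k - atil l a (k + 1)) * t k +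
          (atil l a m - scaledCoeff l a (m + 1)) * t m + scaledCoeff l a (m + 1) * t (m + 1) := by
  induction m with
  | zero =>
    simp only [sum_range_succ, range_zero, sum_empty, backDiff_zero, backDiff_succ, atil,
      scaledCoeff]
    ring
  | succ m ih =>
    rw [sum_range_succ, ih]
    simp only [sum_range_succ, backDiff_succ, atil, scaledCoeff]
    ring

theorem sum_div_dl_mul_backDiff (t : ℕ → ℂ) (m : ℕ) :
    ∑ k ∈ range (m + 1), a k / ((dl l k : ℝ) : ℂ) * backDiff (fun n => (l n : ℂ) * backDiff t n) k
      = ∑ k ∈ range (m + 1), abelMatrix l a m k * t k := by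
  cases m with
  | zero =>
    rw [sum_range_one, sum_range_one, abelMatrix_self, backDiff_zero, backDiff_zero, scaledCoeff]
    ring
  | succ m =>
    rw [sum_div_dl_mul_backDiff_succ, sum_range_abelMatrix_succ l a fun k z => z * t k]

end AbelMatrix

theorem exists_bound_sum_norm_abelMatrix_iff (l : ℕ → ℝ) (a : ℕ → ℂ) :
    (∃ R, ∀ m, ∑ k ∈ range (m + 1), ‖abelMatrix l a m k‖ ≤ R) ↔
      (Summable fun k => ‖atil l a k - atil l a (k + 1)‖) ∧
        ∃ C, ∀ k, ‖scaledCoeff l a k‖ ≤ C := by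
  constructor
  · rintro ⟨R, hR⟩
    refine ⟨summable_of_sum_range_le (c := R) (fun _ => norm_nonneg _) fun m => ?_, R, fun k => ?_⟩
    · refine le_trans ?_ (hR (m + 1))
      rw [sum_range_abelMatrix_succ l a fun _ z => ‖z‖, add_assoc]
      exact le_add_of_nonneg_right (by positivity)
    · rw [← abelMatrix_self]
      exact (single_le_sum (fun _ _ => norm_nonneg _) (self_mem_range_succ k)).trans (hR k)
  · rintro ⟨hd, C, hC⟩
    set D := ∑' k, ‖atil l a k - atil l a (k + 1)‖
    have hD : ∀ m, ∑ k ∈ range m, ‖atil l a k - atil l a (k + 1)‖ ≤ D := fun m =>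
      hd.sum_le_tsum _ fun _ _ => norm_nonneg _
    have hatil : ∀ m, ‖atil l a m‖ ≤ ‖atil l a 0‖ + D := fun m =>
      calc ‖atil l a m‖ ≤ ‖atil l a 0‖ + ‖atil l a m - atil l a 0‖ := norm_le_insert' _ _
        _ ≤ ‖atil l a 0‖ + D := by
            rw [← dist_eq_norm']
            gcongr
            refine (dist_le_range_sum_dist (atil l a) m).trans ?_
            simpa only [dist_eq_norm] using hD m
    refine ⟨D + (‖atil l a 0‖ + D + C) + C, fun m => ?_⟩
    cases m with
    | zero =>
      have hD0 : 0 ≤ D := tsum_nonneg fun _ => norm_nonneg _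
      have hC0 : 0 ≤ C := (norm_nonneg _).trans (hC 0)
      rw [zero_add, sum_range_one, abelMatrix_self]
      linarith [hC 0, norm_nonneg (atil l a 0)]
    | succ m =>
      rw [sum_range_abelMatrix_succ l a fun _ z => ‖z‖]
      gcongr
      · exact hD m
      · exact (norm_sub_le _ _).trans (add_le_add (hatil m) (hC _))
      · exact hC _

theorem dl_pos {l : ℕ → ℝ} (hmono : StrictMono l) (hpos : 0 < l 0) (k : ℕ) : 0 < dl l k := by
  cases k with
  | zero => simpa [dl] using hpos
  | succ k => simpa [dl] using hmono k.lt_succ_self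

section LamSum
variable {l : ℕ → ℝ}

theorem backDiff_lamSum (x : ℕ → ℂ) : backDiff (lamSum l x) = LamT l x :=
  backDiff_sum_range _

theorem ofReal_mul_LamT {n : ℕ} (hl : l n ≠ 0) (x : ℕ → ℂ) :
    (l n : ℂ) * LamT l x n = ∑ k ∈ range (n + 1), ((dl l k : ℝ) : ℂ) * x k := by
  rw [LamT, ← mul_assoc, mul_one_div_cancel (by exact_mod_cast hl), one_mul]

variable (hl : ∀ k, l k ≠ 0) (hdl : ∀ k, dl l k ≠ 0)
include hl hdl

theorem lamSum_surjective : Function.Surjective (lamSum l) := by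
  intro t
  set u : ℕ → ℂ := fun n => (l n : ℂ) * backDiff t n
  refine ⟨fun k => backDiff u k / (dl l k : ℂ), funext fun m => ?_⟩
  have hLamT : ∀ n, LamT l (fun k => backDiff u k / (dl l k : ℂ)) n = backDiff t n := fun n => by
    have hsum : ∑ k ∈ range (n + 1), (dl l k : ℂ) * (backDiff u k / (dl l k : ℂ)) = u n := by
      simp_rw [mul_div_cancel₀ _ (Complex.ofReal_ne_zero.mpr (hdl _)), sum_range_backDiff]
    rw [LamT, hsum, one_div, inv_mul_cancel_left₀ (Complex.ofReal_ne_zero.mpr (hl n))]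
  simp only [lamSum, hLamT, sum_range_backDiff]

theorem sum_mul_eq_sum_abelMatrix_mul_lamSum (a x : ℕ → ℂ) (m : ℕ) :
    ∑ k ∈ range (m + 1), a k * x k = ∑ k ∈ range (m + 1), abelMatrix l a m k * lamSum l x k := by
  simp_rw [← sum_div_dl_mul_backDiff, backDiff_lamSum, ofReal_mul_LamT (hl _),
    backDiff_sum_range (fun k => (dl l k : ℂ) * x k)]
  refine sum_congr rfl fun k _ => ?_
  rw [← mul_assoc, div_mul_cancel₀ _ (Complex.ofReal_ne_zero.mpr (hdl k))]

end LamSum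

def gammaDual (X : Set (ℕ → ℂ)) : Set (ℕ → ℂ) :=
  {a | ∀ x ∈ X, ∃ C : ℝ, ∀ m, ‖∑ k ∈ range (m + 1), a k * x k‖ ≤ C}

theorem gammaDual_anti {X Y : Set (ℕ → ℂ)} (h : X ⊆ Y) : gammaDual Y ⊆ gammaDual X :=
  fun _ ha x hx => ha x (h hx)

theorem cs0Lam_subset_csLam (l : ℕ → ℝ) : cs0Lam l ⊆ csLam l :=
  fun _ hx => ⟨0, hx⟩

theorem csLam_subset_bsLam (l : ℕ → ℝ) : csLam l ⊆ bsLam l :=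
  fun _ ⟨_, hL⟩ => hL.norm.bddAbove_range.imp fun _ hC m => hC ⟨m, rfl⟩

section GammaDual
variable {l : ℕ → ℝ} (hl : ∀ k, l k ≠ 0) (hdl : ∀ k, dl l k ≠ 0)
include hl hdl

theorem conditions_of_mem_gammaDual_cs0Lam {a : ℕ → ℂ} (ha : a ∈ gammaDual (cs0Lam l)) :
    (Summable fun k => ‖atil l a k - atil l a (k + 1)‖) ∧ ∃ C, ∀ k, ‖scaledCoeff l a k‖ ≤ C := by
  rw [← exists_bound_sum_norm_abelMatrix_iff]
  refine exists_bound_sum_norm_of_forall_tendsto_zero _ _ fun t ht => ?_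
  obtain ⟨x, rfl⟩ := lamSum_surjective hl hdl t
  obtain ⟨C, hC⟩ := ha x ht
  exact ⟨C, fun m => sum_mul_eq_sum_abelMatrix_mul_lamSum hl hdl a x m ▸ hC m⟩

theorem mem_gammaDual_bsLam_of_conditions {a : ℕ → ℂ}
    (h : (Summable fun k => ‖atil l a k - atil l a (k + 1)‖) ∧
      ∃ C, ∀ k, ‖scaledCoeff l a k‖ ≤ C) :
    a ∈ gammaDual (bsLam l) := by
  rintro x ⟨M, hM⟩
  obtain ⟨R, hR⟩ := (exists_bound_sum_norm_abelMatrix_iff l a).mpr h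
  refine ⟨R * M, fun m => ?_⟩
  rw [sum_mul_eq_sum_abelMatrix_mul_lamSum hl hdl]
  exact (norm_sum_mul_le _ _ hM).trans
    (mul_le_mul_of_nonneg_right (hR m) ((norm_nonneg _).trans (hM 0)))

end GammaDual

theorem stmt17_general (l : ℕ → ℝ) (hmono : StrictMono l) (hpos : 0 < l 0)
    (a : ℕ → ℂ) :
    ((∀ x ∈ csLam l, ∃ C : ℝ, ∀ m, ‖∑ k ∈ Finset.range (m + 1), a k * x k‖ ≤ C) ↔
      ((Summable fun k => ‖atil l a k - atil l a (k + 1)‖) ∧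
        ∃ C : ℝ, ∀ k, ‖(l k : ℂ) * a k / ((dl l k : ℝ) : ℂ)‖ ≤ C)) ∧
    ((∀ x ∈ cs0Lam l, ∃ C : ℝ, ∀ m, ‖∑ k ∈ Finset.range (m + 1), a k * x k‖ ≤ C) ↔
      ((Summable fun k => ‖atil l a k - atil l a (k + 1)‖) ∧
        ∃ C : ℝ, ∀ k, ‖(l k : ℂ) * a k / ((dl l k : ℝ) : ℂ)‖ ≤ C)) ∧
    ((∀ x ∈ bsLam l, ∃ C : ℝ, ∀ m, ‖∑ k ∈ Finset.range (m + 1), a k * x k‖ ≤ C) ↔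
      ((Summable fun k => ‖atil l a k - atil l a (k + 1)‖) ∧
        ∃ C : ℝ, ∀ k, ‖(l k : ℂ) * a k / ((dl l k : ℝ) : ℂ)‖ ≤ C)) := by
  have hl : ∀ k, l k ≠ 0 := fun k => (hpos.trans_le (hmono.monotone k.zero_le)).ne'
  have hdl : ∀ k, dl l k ≠ 0 := fun k => (dl_pos hmono hpos k).ne'
  have necessary := conditions_of_mem_gammaDual_cs0Lam hl hdl (a := a)
  have sufficient := mem_gammaDual_bsLam_of_conditions hl hdl (a := a)
  have h0 := gammaDual_anti (cs0Lam_subset_csLam l)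
  have h1 := gammaDual_anti (csLam_subset_bsLam l)
  exact ⟨⟨fun h => necessary (h0 h), fun h => h1 (sufficient h)⟩,
    ⟨necessary, fun h => h0 (h1 (sufficient h))⟩,
    ⟨fun h => necessary (h0 (h1 h)), sufficient⟩⟩

theorem stmt17 (l : ℕ → ℝ) (hmono : StrictMono l) (hpos : 0 < l 0)
    (hlim : Tendsto l atTop atTop) (a : ℕ → ℂ) :
    ((∀ x ∈ csLam l, ∃ C : ℝ, ∀ m, ‖∑ k ∈ Finset.range (m + 1), a k * x k‖ ≤ C) ↔
      ((Summable fun k => ‖atil l a k - atil l a (k + 1)‖) ∧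
        ∃ C : ℝ, ∀ k, ‖(l k : ℂ) * a k / ((dl l k : ℝ) : ℂ)‖ ≤ C)) ∧
    ((∀ x ∈ cs0Lam l, ∃ C : ℝ, ∀ m, ‖∑ k ∈ Finset.range (m + 1), a k * x k‖ ≤ C) ↔
      ((Summable fun k => ‖atil l a k - atil l a (k + 1)‖) ∧
        ∃ C : ℝ, ∀ k, ‖(l k : ℂ) * a k / ((dl l k : ℝ) : ℂ)‖ ≤ C)) ∧
    ((∀ x ∈ bsLam l, ∃ C : ℝ, ∀ m, ‖∑ k ∈ Finset.range (m + 1), a k * x k‖ ≤ C) ↔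
      ((Summable fun k => ‖atil l a k - atil l a (k + 1)‖) ∧
        ∃ C : ℝ, ∀ k, ‖(l k : ℂ) * a k / ((dl l k : ℝ) : ℂ)‖ ≤ C)) :=
  stmt17_general l hmono hpos a
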